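/- arXiv:1203.5464 — 3 statements merged into one kernel-verified Lean document; each statement's English description precedes it below -/
import Mathlib

section
/- The function g(γ) = f(γ)/(3-γ), where f(γ) = -γ·ln(γ) - (1-γ)·ln(1-γ) is the binary entropy function, attains its maximum on the interval (0,1) at a unique point γ* with γ* ≤ 0.56985, and g(γ*) ≤ ln(1.7549)/2. -/
/-!
The derivative of `gfun` is `(2 log (1 - γ) - 3 log γ) / (3 - γ)²`. Its numerator is strictly
decreasing on `(0, 1)` and vanishes exactly where `(1 - γ)² = γ³`, so `gfun` increases up to the
unique root `γ*` of this cubic and decreases after it. At `γ*` the critical-point equation collapses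
the value to `2 gfun γ* = -log γ*`, so both bounds amount to locating the root in
`[1 / 1.7549, 0.56985]`, which the intermediate value theorem does.
-/

/-- The binary entropy function. -/
noncomputable def binEnt (γ : ℝ) : ℝ := -γ * Real.log γ - (1 - γ) * Real.log (1 - γ)

/-- `g γ = f γ / (3 - γ)`. -/
noncomputable def gfun (γ : ℝ) : ℝ := binEnt γ / (3 - γ)

open Real Set

theorem apply_lt_of_hasDerivAt_sign_change {f f' : ℝ → ℝ} {a b c : ℝ} (hc : c ∈ Ioo a b)
    (hf : ∀ x ∈ Ioo a b, HasDerivAt f (f' x) x)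
    (hpos : ∀ x ∈ Ioo a c, 0 < f' x) (hneg : ∀ x ∈ Ioo c b, f' x < 0) :
    ∀ x ∈ Ioo a b, x ≠ c → f x < f c := by
  have hcont : ContinuousOn f (Ioo a b) := fun x hx => (hf x hx).continuousAt.continuousWithinAt
  have hmono : StrictMonoOn f (Ioc a c) := by
    refine strictMonoOn_of_hasDerivWithinAt_pos (f' := f') (convex_Ioc a c)
      (hcont.mono (Ioc_subset_Ioo_right hc.2)) (fun x hx => ?_) (fun x hx => ?_)
    all_goals rw [interior_Ioc] at hx
    · exact (hf x ⟨hx.1, hx.2.trans hc.2⟩).hasDerivWithinAt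
    · exact hpos x hx
  have hanti : StrictAntiOn f (Ico c b) := by
    refine strictAntiOn_of_hasDerivWithinAt_neg (f' := f') (convex_Ico c b)
      (hcont.mono (Ico_subset_Ioo_left hc.1)) (fun x hx => ?_) (fun x hx => ?_)
    all_goals rw [interior_Ico] at hx
    · exact (hf x ⟨hc.1.trans hx.1, hx.2⟩).hasDerivWithinAt
    · exact hneg x hx
  intro x hx hxc
  rcases hxc.lt_or_gt with hlt | hgt
  · exact hmono ⟨hx.1, hlt.le⟩ ⟨hc.1, le_rfl⟩ hlt
  · exact hanti ⟨le_rfl, hc.2⟩ ⟨hgt.le, hx.2⟩ hgt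

theorem binEnt_eq_binEntropy : binEnt = binEntropy := by
  funext γ
  simp only [binEnt, binEntropy, log_inv]
  ring

noncomputable def gfunDerivNum (γ : ℝ) : ℝ := 2 * log (1 - γ) - 3 * log γ

theorem hasDerivAt_gfun {x : ℝ} (hx : x ∈ Ioo 0 1) :
    HasDerivAt gfun (gfunDerivNum x / (3 - x) ^ 2) x := by
  have hent : HasDerivAt binEnt (log (1 - x) - log x) x :=
    binEnt_eq_binEntropy ▸ hasDerivAt_binEntropy hx.1.ne' hx.2.ne
  have hden : HasDerivAt (fun y : ℝ => 3 - y) (-1) x := by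
    simpa using (hasDerivAt_id x).const_sub 3
  have hne : (3 : ℝ) - x ≠ 0 := by linarith [hx.2]
  refine (hent.div hden hne : HasDerivAt gfun _ x).congr_deriv ?_
  simp only [gfunDerivNum, binEnt]
  ring

theorem gfunDerivNum_strictAntiOn : StrictAntiOn gfunDerivNum (Ioo 0 1) := by
  intro x hx y hy hxy
  have h1 : log (1 - y) < log (1 - x) := log_lt_log (by linarith [hy.2]) (by linarith)
  have h2 : log x < log y := log_lt_log hx.1 hxy
  simp only [gfunDerivNum]
  linarith

theorem gfunDerivNum_eq_zero_of_sq_eq_cube {c : ℝ} (h : (1 - c) ^ 2 = c ^ 3) : gfunDerivNum c = 0 := by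
  have hlog := congrArg log h
  rw [log_pow, log_pow] at hlog
  push_cast at hlog
  simp only [gfunDerivNum]
  linarith

theorem gfun_lt_of_sq_eq_cube {c : ℝ} (hc : c ∈ Ioo 0 1) (h : (1 - c) ^ 2 = c ^ 3) :
    ∀ x ∈ Ioo 0 1, x ≠ c → gfun x < gfun c := by
  have hzero := gfunDerivNum_eq_zero_of_sq_eq_cube h
  refine apply_lt_of_hasDerivAt_sign_change hc (fun x hx => hasDerivAt_gfun hx)
    (fun x hx => ?_) (fun x hx => ?_)
  · have hx' : x ∈ Ioo 0 1 := ⟨hx.1, hx.2.trans hc.2⟩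
    have := gfunDerivNum_strictAntiOn hx' hc hx.2
    exact div_pos (by linarith) (pow_pos (by linarith [hx'.2]) 2)
  · have hx' : x ∈ Ioo 0 1 := ⟨hc.1.trans hx.1, hx.2⟩
    have := gfunDerivNum_strictAntiOn hc hx' hx.1
    exact div_neg_of_neg_of_pos (by linarith) (pow_pos (by linarith [hx'.2]) 2)

theorem two_mul_gfun_of_sq_eq_cube {c : ℝ} (h : (1 - c) ^ 2 = c ^ 3) : 2 * gfun c = -log c := by
  have hden : (3 : ℝ) - c ≠ 0 := by
    intro h3
    obtain rfl : c = 3 := by linarith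
    norm_num at h
  have hzero := gfunDerivNum_eq_zero_of_sq_eq_cube h
  simp only [gfunDerivNum] at hzero
  rw [gfun, binEnt, mul_div_assoc', div_eq_iff hden]
  linear_combination (c - 1) * hzero

theorem gfun_max :
    ∃ γs ∈ Set.Ioo (0 : ℝ) 1,
      (∀ γ ∈ Set.Ioo (0 : ℝ) 1, gfun γ ≤ gfun γs) ∧
      (∀ γ' ∈ Set.Ioo (0 : ℝ) 1,
        (∀ γ ∈ Set.Ioo (0 : ℝ) 1, gfun γ ≤ gfun γ') → γ' = γs) ∧
      γs ≤ 0.56985 ∧ 2 * gfun γs ≤ Real.log 1.7549 := by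
  obtain ⟨γs, ⟨hlo, hhi⟩, hroot⟩ :=
    intermediate_value_Icc (by norm_num : (1.7549 : ℝ)⁻¹ ≤ 0.56985)
      (f := fun x : ℝ => x ^ 3 - (1 - x) ^ 2) (by fun_prop)
      (⟨by norm_num, by norm_num⟩ : (0 : ℝ) ∈ Icc _ _)
  have hcrit : (1 - γs) ^ 2 = γs ^ 3 := (sub_eq_zero.mp hroot).symm
  have hγs : γs ∈ Ioo 0 1 := ⟨lt_of_lt_of_le (by norm_num) hlo, by linarith⟩
  have hstrict := gfun_lt_of_sq_eq_cube hγs hcrit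
  refine ⟨γs, hγs, fun γ hγ => ?_, fun γ' hγ' hmax => ?_, hhi, ?_⟩
  · rcases eq_or_ne γ γs with rfl | hne
    · exact le_rfl
    · exact (hstrict γ hγ hne).le
  · by_contra hne
    exact (hstrict γ' hγ' hne).not_ge (hmax γs hγs)
  · rw [two_mul_gfun_of_sq_eq_cube hcrit, ← log_inv]
    exact log_le_log (inv_pos.mpr hγs.1) (inv_le_of_inv_le₀ (by norm_num) hlo)
end

section
/- For all γ in the open interval (0,1), the value 2·f(γ)/(3-γ) is at most ln(1.7549), where f is the binary entropy function. -/
open Real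

lemma mul_log_div_le_sub {a b : ℝ} (ha : 0 < a) (hb : 0 < b) : a * log (b / a) ≤ b - a :=
  calc a * log (b / a) ≤ a * (b / a - 1) := by
        gcongr; exact log_le_sub_one_of_pos (by positivity)
    _ = b - a := by field_simp

lemma binEnt_le_cross_entropy {γ p : ℝ} (hγ : γ ∈ Set.Ioo (0 : ℝ) 1) (hp : p ∈ Set.Ioo (0 : ℝ) 1) :
    binEnt γ ≤ -γ * log p - (1 - γ) * log (1 - p) := by
  obtain ⟨hγ₀, hγ₁⟩ := hγ
  obtain ⟨hp₀, hp₁⟩ := hp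
  have hγ' : 0 < 1 - γ := by linarith
  have hp' : 0 < 1 - p := by linarith
  have h₁ := mul_log_div_le_sub hγ₀ hp₀
  have h₂ := mul_log_div_le_sub hγ' hp'
  rw [log_div hp₀.ne' hγ₀.ne'] at h₁
  rw [log_div hp'.ne' hγ'.ne'] at h₂
  unfold binEnt
  linarith

theorem two_g_le_log (γ : ℝ) (hγ : γ ∈ Set.Ioo (0 : ℝ) 1) :
    2 * binEnt γ / (3 - γ) ≤ Real.log 1.7549 := by
  -- Both endpoint checks are equalities for `p = x²`, `x² + x³ = 1`, `c = -log p`; then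
  -- `c (3 - γ) / 2` is the tangent to `f` through `(3, 0)`, and `1.7549` rounds `1 / p` up.
  set p : ℝ := 0.56984029
  have h_one : -2 * log p ≤ 2 * log 1.7549 := by
    have h := log_le_log (by norm_num) (show p⁻¹ ≤ 1.7549 by norm_num [p])
    rw [log_inv] at h
    linarith
  have h_zero : -2 * log (1 - p) ≤ 3 * log 1.7549 := by
    have h := log_le_log (by norm_num) (show ((1 - p) ^ 2)⁻¹ ≤ (1.7549 : ℝ) ^ 3 by norm_num [p])
    rw [log_inv, log_pow, log_pow] at h
    push_cast at h
    linarith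
  have hγ₀ : 0 ≤ γ := hγ.1.le
  have hγ₁ : 0 ≤ 1 - γ := by linarith [hγ.2]
  rw [div_le_iff₀ (by linarith [hγ.2])]
  calc 2 * binEnt γ ≤ γ * (-2 * log p) + (1 - γ) * (-2 * log (1 - p)) := by
        linarith [binEnt_le_cross_entropy hγ (show p ∈ Set.Ioo (0 : ℝ) 1 by norm_num [p])]
    _ ≤ γ * (2 * log 1.7549) + (1 - γ) * (3 * log 1.7549) := by gcongr
    _ = log 1.7549 * (3 - γ) := by ring
end

section
/- There exists a constant C and a polynomial p such that for all positive integers n divisible by 3, the sum Σ_{k=1}^{n/3} C(n-k, 2k) is at most p(n)·1.7549^n. -/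
/-!
Write `a_j(n) = ∑ₖ C(n - k, 2k + j)`. Pascal's rule gives `a_1(n + 1) = a_0(n) + a_1(n)` and
`a_0(n + 2) = a_0(n + 1) + a_1(n)`, so `a_0` grows like the real root `1.75488…` of
`x (x - 1)² = 1`. For any `r` with `r (r - 1)² ≥ 1` these recurrences preserve the bounds
`a_0(n) ≤ rⁿ` and `a_1(n) ≤ (r - 1) rⁿ⁺¹`, and `r = 1.7549` qualifies. The sum in the theorem is
part of `a_0(n)`.
-/

open Finset

def chooseDiag (j n : ℕ) : ℕ := ∑ k ∈ range (n + 1), (n - k).choose (2 * k + j)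

theorem chooseDiag_succ (j n : ℕ) :
    chooseDiag j (n + 1) = (n + 1).choose j + chooseDiag (j + 2) n := by
  rw [chooseDiag, sum_range_succ', add_comm, chooseDiag]
  congr 1 <;> [simp; refine sum_congr rfl fun k _ => ?_]
  rw [Nat.add_sub_add_right]
  ring_nf

theorem chooseDiag_succ_succ (j n : ℕ) :
    chooseDiag (j + 1) (n + 1) = chooseDiag j n + chooseDiag (j + 1) n := by
  rw [chooseDiag, sum_range_succ, Nat.sub_self, ← add_assoc, Nat.choose_zero_succ, add_zero,
    chooseDiag, chooseDiag, ← sum_add_distrib]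
  refine sum_congr rfl fun k hk => ?_
  rw [Nat.sub_add_comm (Nat.le_of_lt_succ (mem_range.mp hk)), ← add_assoc,
    Nat.choose_succ_succ', add_assoc]

theorem chooseDiag_zero_add_two (n : ℕ) :
    chooseDiag 0 (n + 2) = chooseDiag 0 (n + 1) + chooseDiag 1 n := by
  rw [chooseDiag_succ, chooseDiag_succ_succ, chooseDiag_succ]
  simp only [Nat.choose_zero_right]
  ring

theorem chooseDiag_zero_le_pow {r : ℝ} (hr : 1 ≤ r * (r - 1) ^ 2) (n : ℕ) :
    (chooseDiag 0 n : ℝ) ≤ r ^ n := by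
  have hr_pos : 0 < r := by
    by_contra! h
    nlinarith [sq_nonneg (r - 1)]
  have hr_one : 1 ≤ r := by
    by_contra! h
    nlinarith [mul_pos hr_pos (sub_pos.2 h)]
  suffices h : ∀ n, (chooseDiag 0 n : ℝ) ≤ r ^ n ∧ (chooseDiag 1 n : ℝ) ≤ (r - 1) * r ^ (n + 1)
      ∧ (chooseDiag 0 (n + 1) : ℝ) ≤ r ^ (n + 1) from (h n).1
  intro n
  induction n with
  | zero =>
    have : chooseDiag 0 0 = 1 ∧ chooseDiag 1 0 = 0 ∧ chooseDiag 0 1 = 1 := by decide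
    simp only [this, Nat.cast_one, Nat.cast_zero, pow_zero, zero_add, pow_one]
    exact ⟨le_rfl, by positivity, hr_one⟩
  | succ n ih =>
    obtain ⟨heven, hodd, heven_succ⟩ := ih
    refine ⟨heven_succ, ?_, ?_⟩
    · rw [chooseDiag_succ_succ, Nat.cast_add]
      calc (chooseDiag 0 n : ℝ) + chooseDiag 1 n ≤ r ^ n + (r - 1) * r ^ (n + 1) :=
            add_le_add heven hodd
        _ = (r - 1) * r ^ (n + 1 + 1) - (r * (r - 1) ^ 2 - 1) * r ^ n := by ring
        _ ≤ (r - 1) * r ^ (n + 1 + 1) :=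
            sub_le_self _ (mul_nonneg (sub_nonneg.2 hr) (pow_pos hr_pos n).le)
    · rw [chooseDiag_zero_add_two, Nat.cast_add]
      calc (chooseDiag 0 (n + 1) : ℝ) + chooseDiag 1 n ≤ r ^ (n + 1) + (r - 1) * r ^ (n + 1) :=
            add_le_add heven_succ hodd
        _ = r ^ (n + 1 + 1) := by ring

theorem sum_Icc_choose_le_chooseDiag (n : ℕ) :
    ∑ k ∈ Icc 1 (n / 3), (n - k).choose (2 * k) ≤ chooseDiag 0 n :=
  sum_le_sum_of_subset fun k hk => by
    rw [mem_Icc] at hk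
    rw [mem_range]
    omega

theorem sum_choose_bound :
    ∃ (C : ℝ) (p : Polynomial ℝ), ∀ n : ℕ, 0 < n → 3 ∣ n →
      (∑ k ∈ Finset.Icc 1 (n / 3), ((n - k).choose (2 * k) : ℝ)) ≤
        C * p.eval (n : ℝ) * 1.7549 ^ n := by
  refine ⟨1, 1, fun n _ _ => ?_⟩
  rw [Polynomial.eval_one, one_mul, one_mul]
  calc (∑ k ∈ Icc 1 (n / 3), ((n - k).choose (2 * k) : ℝ))
      ≤ chooseDiag 0 n := mod_cast sum_Icc_choose_le_chooseDiag n
    _ ≤ 1.7549 ^ n := chooseDiag_zero_le_pow (by norm_num) n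
end
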